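/- A bigraph B is a mixed proper interval bigraph if and only if B is a mixed unit interval bigraph. -/
import Mathlib



/-- `𝓘⁺⁺`: the family of bounded closed intervals `[a, b]` with `a < b`. -/
def IccFam : Set (Set ℝ) := {s | ∃ a b : ℝ, a < b ∧ s = Set.Icc a b}

/-- `𝓘⁻⁻`: the family of bounded open intervals `(a, b)` with `a < b`. -/
def IooFam : Set (Set ℝ) := {s | ∃ a b : ℝ, a < b ∧ s = Set.Ioo a b}

/-- `𝓘⁺⁻`: the family of bounded closed-open intervals `[a, b)` with `a < b`. -/
def IcoFam : Set (Set ℝ) := {s | ∃ a b : ℝ, a < b ∧ s = Set.Ico a b}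

/-- `𝓘⁻⁺`: the family of bounded open-closed intervals `(a, b]` with `a < b`. -/
def IocFam : Set (Set ℝ) := {s | ∃ a b : ℝ, a < b ∧ s = Set.Ioc a b}

/-- `𝓘`: all bounded intervals of the four types. -/
def IntervalFam : Set (Set ℝ) := IccFam ∪ IooFam ∪ IcoFam ∪ IocFam

/-- `𝓤`: all unit intervals of the four types. -/
def UnitFam : Set (Set ℝ) :=
  {s | ∃ a : ℝ, s = Set.Icc a (a + 1)} ∪ {s | ∃ a : ℝ, s = Set.Ioo a (a + 1)} ∪
    {s | ∃ a : ℝ, s = Set.Ico a (a + 1)} ∪ {s | ∃ a : ℝ, s = Set.Ioc a (a + 1)}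

/-- A bigraph `B = (X, Y, E)` is an `M`-bigraph if it admits an `M`-intersection
representation. -/
def IsMBigraph (M : Set (Set ℝ)) {X Y : Type} (E : X → Y → Prop) : Prop :=
  ∃ f : X ⊕ Y → Set ℝ, (∀ v, f v ∈ M) ∧
    ∀ x y, E x y ↔ (f (Sum.inl x) ∩ f (Sum.inr y)).Nonempty

/-- `B` is a mixed proper interval bigraph: it has an `𝓘`-intersection
representation in which (i) for distinct vertices `u, v` whose intervals are both
closed, neither interval is properly contained in the other, and (ii) for every
vertex whose interval is not closed (i.e. is `(a,b)`, `[a,b)` or `(a,b]`) there is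
a vertex whose interval is the closed interval `[a, b]` with the same infimum `a`
and supremum `b`. -/
def IsMixedProperIntervalBigraph {X Y : Type} (E : X → Y → Prop) : Prop :=
  ∃ f : X ⊕ Y → Set ℝ,
    (∀ v, f v ∈ IntervalFam) ∧
    (∀ x y, E x y ↔ (f (Sum.inl x) ∩ f (Sum.inr y)).Nonempty) ∧
    (∀ u v : X ⊕ Y, u ≠ v → f u ∈ IccFam → f v ∈ IccFam → ¬ f u ⊂ f v) ∧
    (∀ (u : X ⊕ Y) (a b : ℝ), a < b →
      (f u = Set.Ioo a b ∨ f u = Set.Ico a b ∨ f u = Set.Ioc a b) →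
      ∃ v : X ⊕ Y, f v = Set.Icc a b)



/-- General interval with endpoints `a b` and closedness flags `l r`. -/
def mkI (a b : ℝ) (l r : Bool) : Set ℝ :=
  {x | (if l then a ≤ x else a < x) ∧ (if r then x ≤ b else x < b)}

lemma mkI_tt (a b : ℝ) : mkI a b true true = Set.Icc a b := by ext x; simp [mkI, Set.mem_Icc]
lemma mkI_ff (a b : ℝ) : mkI a b false false = Set.Ioo a b := by ext x; simp [mkI, Set.mem_Ioo]
lemma mkI_tf (a b : ℝ) : mkI a b true false = Set.Ico a b := by ext x; simp [mkI, Set.mem_Ico]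
lemma mkI_ft (a b : ℝ) : mkI a b false true = Set.Ioc a b := by ext x; simp [mkI, Set.mem_Ioc]

lemma mkI_subset_Icc (a b : ℝ) (l r : Bool) : mkI a b l r ⊆ Set.Icc a b := by
  cases l <;> cases r <;> simp [mkI_tt, mkI_ff, mkI_tf, mkI_ft,
    Set.Ioo_subset_Icc_self, Set.Ico_subset_Icc_self, Set.Ioc_subset_Icc_self]

lemma Ioo_subset_mkI (a b : ℝ) (l r : Bool) : Set.Ioo a b ⊆ mkI a b l r := by
  cases l <;> cases r <;> simp [mkI_tt, mkI_ff, mkI_tf, mkI_ft,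
    Set.Ioo_subset_Icc_self, Set.Ioo_subset_Ico_self, Set.Ioo_subset_Ioc_self]

lemma csInf_mkI {a b : ℝ} (h : a < b) (l r : Bool) : sInf (mkI a b l r) = a := by
  cases l <;> cases r <;>
    simp only [mkI_tt, mkI_ff, mkI_tf, mkI_ft] <;>
    first
      | exact csInf_Ioo h
      | exact csInf_Ioc h
      | exact csInf_Ico h
      | exact csInf_Icc h.le

lemma csSup_mkI {a b : ℝ} (h : a < b) (l r : Bool) : sSup (mkI a b l r) = b := by
  cases l <;> cases r <;>
    simp only [mkI_tt, mkI_ff, mkI_tf, mkI_ft] <;>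
    first
      | exact csSup_Ioo h
      | exact csSup_Ioc h
      | exact csSup_Ico h
      | exact csSup_Icc h.le

lemma left_mem_mkI {a b : ℝ} (h : a < b) (l r : Bool) : a ∈ mkI a b l r ↔ l = true := by
  cases l <;> cases r <;> simp [mkI, h, h.le]

lemma right_mem_mkI {a b : ℝ} (h : a < b) (l r : Bool) : b ∈ mkI a b l r ↔ r = true := by
  cases l <;> cases r <;> simp [mkI, h, h.le]

lemma mkI_inj {a b c d : ℝ} {l r l' r' : Bool} (hab : a < b) (hcd : c < d)
    (h : mkI a b l r = mkI c d l' r') : a = c ∧ b = d ∧ l = l' ∧ r = r' := by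
  have ha : a = c := by rw [← csInf_mkI hab l r, h, csInf_mkI hcd l' r']
  have hb : b = d := by rw [← csSup_mkI hab l r, h, csSup_mkI hcd l' r']
  subst ha; subst hb
  have hmeml : a ∈ mkI a b l r ↔ a ∈ mkI a b l' r' := by rw [h]
  have hmemr : b ∈ mkI a b l r ↔ b ∈ mkI a b l' r' := by rw [h]
  have hl : (l = true) ↔ (l' = true) :=
    (left_mem_mkI hab l r).symm.trans (hmeml.trans (left_mem_mkI hab l' r'))
  have hr : (r = true) ↔ (r' = true) :=
    (right_mem_mkI hab l r).symm.trans (hmemr.trans (right_mem_mkI hab l' r'))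
  refine ⟨rfl, rfl, ?_, ?_⟩
  · cases l <;> cases l' <;> simp_all
  · cases r <;> cases r' <;> simp_all

lemma mkI_mem_IntervalFam {a b : ℝ} (h : a < b) (l r : Bool) : mkI a b l r ∈ IntervalFam := by
  cases l <;> cases r <;>
    simp only [mkI_tt, mkI_ff, mkI_tf, mkI_ft, IntervalFam, IccFam, IooFam, IcoFam, IocFam,
      Set.mem_union, Set.mem_setOf_eq]
  · exact Or.inl (Or.inl (Or.inr ⟨a, b, h, rfl⟩))
  · exact Or.inr ⟨a, b, h, rfl⟩
  · exact Or.inl (Or.inr ⟨a, b, h, rfl⟩)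
  · exact Or.inl (Or.inl (Or.inl ⟨a, b, h, rfl⟩))

lemma mkI_mem_UnitFam (a : ℝ) (l r : Bool) : mkI a (a + 1) l r ∈ UnitFam := by
  cases l <;> cases r <;>
    simp only [mkI_tt, mkI_ff, mkI_tf, mkI_ft, UnitFam, Set.mem_union, Set.mem_setOf_eq]
  · exact Or.inl (Or.inl (Or.inr ⟨a, rfl⟩))
  · exact Or.inr ⟨a, rfl⟩
  · exact Or.inl (Or.inr ⟨a, rfl⟩)
  · exact Or.inl (Or.inl (Or.inl ⟨a, rfl⟩))

lemma mem_IntervalFam_iff {s : Set ℝ} :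
    s ∈ IntervalFam ↔ ∃ a b : ℝ, ∃ l r : Bool, a < b ∧ s = mkI a b l r := by
  constructor
  · rintro (((⟨a, b, h, rfl⟩ | ⟨a, b, h, rfl⟩) | ⟨a, b, h, rfl⟩) | ⟨a, b, h, rfl⟩)
    · exact ⟨a, b, true, true, h, (mkI_tt a b).symm⟩
    · exact ⟨a, b, false, false, h, (mkI_ff a b).symm⟩
    · exact ⟨a, b, true, false, h, (mkI_tf a b).symm⟩
    · exact ⟨a, b, false, true, h, (mkI_ft a b).symm⟩
  · rintro ⟨a, b, l, r, h, rfl⟩; exact mkI_mem_IntervalFam h l r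

lemma mem_UnitFam_iff {s : Set ℝ} :
    s ∈ UnitFam ↔ ∃ a : ℝ, ∃ l r : Bool, s = mkI a (a + 1) l r := by
  constructor
  · rintro (((⟨a, rfl⟩ | ⟨a, rfl⟩) | ⟨a, rfl⟩) | ⟨a, rfl⟩)
    · exact ⟨a, true, true, (mkI_tt _ _).symm⟩
    · exact ⟨a, false, false, (mkI_ff _ _).symm⟩
    · exact ⟨a, true, false, (mkI_tf _ _).symm⟩
    · exact ⟨a, false, true, (mkI_ft _ _).symm⟩
  · rintro ⟨a, l, r, rfl⟩; exact mkI_mem_UnitFam a l r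

/-- Intersection criterion for two generalized intervals. -/
lemma mkI_inter_nonempty {a b c d : ℝ} (hab : a < b) (hcd : c < d) (l r l' r' : Bool) :
    (mkI a b l r ∩ mkI c d l' r').Nonempty ↔
      (a < d ∧ c < b) ∨ (b = c ∧ r = true ∧ l' = true) ∨ (d = a ∧ r' = true ∧ l = true) := by
  constructor
  · rintro ⟨x, hx1, hx2⟩
    have h1 := mkI_subset_Icc a b l r hx1
    have h2 := mkI_subset_Icc c d l' r' hx2
    rcases lt_or_ge a d with had | had
    · rcases lt_or_ge c b with hcb | hcb
      · exact Or.inl ⟨had, hcb⟩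
      · -- b ≤ c : then x ≤ b ≤ c ≤ x
        have hxb : x = b := le_antisymm h1.2 (hcb.trans h2.1)
        have hbc : b = c := le_antisymm hcb (h2.1.trans h1.2)
        subst hxb
        refine Or.inr (Or.inl ⟨hbc, ?_, ?_⟩)
        · exact (right_mem_mkI hab l r).mp hx1
        · rw [hbc] at hx2; exact (left_mem_mkI hcd l' r').mp hx2
    · -- d ≤ a : then x ≤ d ≤ a ≤ x
      have hxa : x = a := le_antisymm (h2.2.trans had) h1.1
      have hda : d = a := le_antisymm had (h1.1.trans h2.2)
      subst hxa
      refine Or.inr (Or.inr ⟨hda, ?_, ?_⟩)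
      · rw [← hda] at hx2; exact (right_mem_mkI hcd l' r').mp hx2
      · exact (left_mem_mkI hab l r).mp hx1
  · rintro (⟨had, hcb⟩ | ⟨hbc, hr, hl'⟩ | ⟨hda, hr', hl⟩)
    · have hmm : max a c < min b d := by
        rw [max_lt_iff, lt_min_iff, lt_min_iff]
        exact ⟨⟨hab, had⟩, hcb, hcd⟩
      obtain ⟨x, hx1, hx2⟩ := exists_between hmm
      refine ⟨x, Ioo_subset_mkI a b l r ?_, Ioo_subset_mkI c d l' r' ?_⟩
      · exact ⟨(le_max_left a c).trans_lt hx1, hx2.trans_le (min_le_left b d)⟩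
      · exact ⟨(le_max_right a c).trans_lt hx1, hx2.trans_le (min_le_right b d)⟩
    · refine ⟨b, (right_mem_mkI hab l r).mpr hr, ?_⟩
      rw [hbc]; exact (left_mem_mkI hcd l' r').mpr hl'
    · refine ⟨a, (left_mem_mkI hab l r).mpr hl, ?_⟩
      rw [← hda]; exact (right_mem_mkI hcd l' r').mpr hr'


lemma exists_unit_positions : ∀ (n : ℕ) (a b : Fin n → ℝ), StrictMono a → StrictMono b →
    (∀ i, a i < b i) → ∃ x : Fin n → ℝ, StrictMono x ∧
      ∀ i j, (x j < x i + 1 ↔ a j < b i) ∧ (x j = x i + 1 ↔ a j = b i) := by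
  intro n
  induction n with
  | zero =>
      intro a b _ _ _
      exact ⟨fun _ => 0, fun i => i.elim0, fun i => i.elim0⟩
  | succ n ih =>
      intro a b ha hb hab
      have ha' : StrictMono (fun i : Fin n => a i.castSucc) :=
        fun i j hij => ha (Fin.castSucc_lt_castSucc_iff.mpr hij)
      have hb' : StrictMono (fun i : Fin n => b i.castSucc) :=
        fun i j hij => hb (Fin.castSucc_lt_castSucc_iff.mpr hij)
      obtain ⟨x, hx, hprop⟩ := ih (fun i => a i.castSucc) (fun i => b i.castSucc)
        ha' hb' (fun i => hab i.castSucc)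
      -- choose the new value t for the last coordinate
      have main : ∃ t : ℝ, (∀ j : Fin n, x j < t) ∧
          ∀ i : Fin n, (t < x i + 1 ↔ a (Fin.last n) < b i.castSucc) ∧
            (t = x i + 1 ↔ a (Fin.last n) = b i.castSucc) := by
        by_cases hcA : ∃ i : Fin n, b i.castSucc = a (Fin.last n)
        · obtain ⟨i₀, hi₀⟩ := hcA
          refine ⟨x i₀ + 1, ?_, ?_⟩
          · intro j
            have h1 : a j.castSucc < b i₀.castSucc := by
              rw [hi₀]; exact ha (Fin.castSucc_lt_last j)
            exact (hprop i₀ j).1.mpr h1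
          · intro i
            constructor
            · constructor
              · intro h
                have : x i₀ < x i := by linarith
                have : i₀ < i := hx.lt_iff_lt.mp this
                have h2 := hb' this
                simp only at h2
                rw [hi₀] at h2; exact h2
              · intro h
                rw [← hi₀] at h
                have : i₀ < i := hb'.lt_iff_lt.mp h
                have := hx this
                linarith
            · constructor
              · intro h
                have : x i₀ = x i := by linarith
                have : i₀ = i := hx.injective this
                rw [← this, hi₀]
              · intro h
                rw [← hi₀] at h
                have : i₀ = i := hb'.injective h
                rw [this]
        · push_neg at hcA
          by_cases hn : (Finset.univ : Finset (Fin n)).Nonempty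
          · set g : Fin n → ℝ := fun j => if b j.castSucc < a (Fin.last n) then x j + 1 else x j with hg
            set low : ℝ := Finset.univ.sup' hn g with hlow
            have hxlow : ∀ j, x j ≤ low := by
              intro j
              refine le_trans ?_ (Finset.le_sup' g (Finset.mem_univ j))
              rw [hg]; dsimp only
              split <;> linarith
            have hlow2 : ∀ j, b j.castSucc < a (Fin.last n) → x j + 1 ≤ low := by
              intro j hj
              refine le_trans ?_ (Finset.le_sup' g (Finset.mem_univ j))
              rw [hg]; dsimp only; rw [if_pos hj]
            set U : Finset (Fin n) := Finset.univ.filter (fun i => a (Fin.last n) < b i.castSucc) with hU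
            by_cases hUne : U.Nonempty
            · set up : ℝ := U.inf' hUne (fun i => x i + 1) with hup
              have hlu : low < up := by
                rw [hlow, Finset.sup'_lt_iff]
                intro j _
                rw [hup, Finset.lt_inf'_iff]
                intro i hi
                have hiU : a (Fin.last n) < b i.castSucc := by
                  rw [hU] at hi; simpa using hi
                rw [hg]; dsimp only
                split_ifs with hj
                · have : j < i := hb'.lt_iff_lt.mp (hj.trans hiU)
                  have := hx this; linarith
                · have : a j.castSucc < b i.castSucc :=
                    lt_trans (ha (Fin.castSucc_lt_last j)) hiU
                  have := (hprop i j).1.mpr this; linarith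
              refine ⟨(low + up) / 2, ?_, ?_⟩
              · intro j; have := hxlow j; linarith
              · intro i
                rcases lt_trichotomy (a (Fin.last n)) (b i.castSucc) with hlt | heq | hgt
                · have hiU : i ∈ U := by rw [hU]; simp [hlt]
                  have h1 : up ≤ x i + 1 := Finset.inf'_le _ hiU
                  constructor
                  · exact iff_of_true (by linarith) hlt
                  · exact iff_of_false (by linarith) (ne_of_lt hlt)
                · exact absurd heq.symm (hcA i)
                · have h1 : x i + 1 ≤ low := hlow2 i hgt
                  constructor
                  · exact iff_of_false (by linarith) (by push_neg; linarith)
                  · exact iff_of_false (by linarith) (by intro h; rw [h] at hgt; linarith)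
            · refine ⟨low + 1, ?_, ?_⟩
              · intro j; have := hxlow j; linarith
              · intro i
                rcases lt_trichotomy (a (Fin.last n)) (b i.castSucc) with hlt | heq | hgt
                · exact absurd ⟨i, by rw [hU]; simp [hlt]⟩ hUne
                · exact absurd heq.symm (hcA i)
                · have h1 : x i + 1 ≤ low := hlow2 i hgt
                  constructor
                  · exact iff_of_false (by linarith) (by push_neg; linarith)
                  · exact iff_of_false (by linarith) (by intro h; rw [h] at hgt; linarith)
          · refine ⟨0, ?_, ?_⟩ <;> intro j <;> exact absurd ⟨j, Finset.mem_univ j⟩ hn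
      obtain ⟨t, ht1, ht2⟩ := main
      refine ⟨Fin.snoc x t, ?_, ?_⟩
      · intro i j hij
        induction j using Fin.lastCases with
        | last =>
            induction i using Fin.lastCases with
            | last => exact absurd hij (lt_irrefl _)
            | cast i₀ => simpa [Fin.snoc_castSucc, Fin.snoc_last] using ht1 i₀
        | cast j₀ =>
            induction i using Fin.lastCases with
            | last => exact absurd (lt_trans (Fin.castSucc_lt_last j₀) hij) (lt_irrefl _)
            | cast i₀ =>
                have : i₀ < j₀ := Fin.castSucc_lt_castSucc_iff.mp hij
                simpa [Fin.snoc_castSucc] using hx this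
      · intro i j
        induction j using Fin.lastCases with
        | last =>
            induction i using Fin.lastCases with
            | last =>
                simp only [Fin.snoc_last]
                exact ⟨iff_of_true (lt_add_one t) (hab _),
                  iff_of_false (by linarith [lt_add_one t]) (ne_of_lt (hab _))⟩
            | cast i₀ =>
                simpa [Fin.snoc_castSucc, Fin.snoc_last] using ht2 i₀
        | cast j₀ =>
            induction i using Fin.lastCases with
            | last =>
                simp only [Fin.snoc_castSucc, Fin.snoc_last]
                have h1 : a j₀.castSucc < b (Fin.last n) :=
                  lt_trans (ha (Fin.castSucc_lt_last j₀)) (hab _)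
                have h2 : x j₀ < t := ht1 j₀
                exact ⟨iff_of_true (by linarith) h1,
                  iff_of_false (by linarith) (ne_of_lt h1)⟩
            | cast i₀ =>
                simpa [Fin.snoc_castSucc] using hprop i₀ j₀
theorem forward_dir {X Y : Type} [Fintype X] [Fintype Y] (E : X → Y → Prop)
    (h : IsMixedProperIntervalBigraph E) : IsMBigraph UnitFam E := by
  classical
  obtain ⟨f, hfam, hiff, hnest, hcl⟩ := h
  have h1 : ∀ v : X ⊕ Y, ∃ a b : ℝ, ∃ l r : Bool, a < b ∧ f v = mkI a b l r :=
    fun v => mem_IntervalFam_iff.mp (hfam v)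
  choose av bv lv rv hab hfv using h1
  -- every interval's closed hull is realized
  have hull : ∀ v, ∃ w, f w = Set.Icc (av v) (bv v) := by
    intro v
    rcases Bool.eq_false_or_eq_true (lv v) with hl | hl <;>
      rcases Bool.eq_false_or_eq_true (rv v) with hr | hr
    · exact ⟨v, by rw [hfv v, hl, hr, mkI_tt]⟩
    · exact hcl v (av v) (bv v) (hab v) (Or.inr (Or.inl (by rw [hfv v, hl, hr, mkI_tf])))
    · exact hcl v (av v) (bv v) (hab v) (Or.inr (Or.inr (by rw [hfv v, hl, hr, mkI_ft])))
    · exact hcl v (av v) (bv v) (hab v) (Or.inl (by rw [hfv v, hl, hr, mkI_ff]))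
  -- non-nesting of hulls
  have key : ∀ v w, av v ≤ av w → bv w ≤ bv v → av v = av w ∧ bv v = bv w := by
    intro v w h1 h2
    by_cases hp : av v = av w ∧ bv v = bv w
    · exact hp
    · exfalso
      obtain ⟨v', hv'⟩ := hull v
      obtain ⟨w', hw'⟩ := hull w
      have hne : f w' ≠ f v' := by
        rw [hv', hw', ← mkI_tt, ← mkI_tt]
        intro hh
        obtain ⟨e1, e2, _, _⟩ := mkI_inj (hab w) (hab v) hh
        exact hp ⟨e1.symm, e2.symm⟩
      have hss : f w' ⊂ f v' := by
        rw [hv', hw']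
        refine ssubset_iff_subset_ne.mpr ⟨Set.Icc_subset_Icc h1 h2, ?_⟩
        rw [hv', hw'] at hne; exact hne
      exact hnest w' v' (fun hh => hne (by rw [hh])) ⟨av w, bv w, hab w, hw'⟩
        ⟨av v, bv v, hab v, hv'⟩ hss
  have F2 : ∀ v w, av v < av w → bv v < bv w := by
    intro v w hvw
    by_contra hc
    push_neg at hc
    exact absurd (key v w hvw.le hc).1 (ne_of_lt hvw)
  have F1 : ∀ v w, av v = av w → bv v = bv w := by
    intro v w hvw
    by_contra hc
    rcases lt_or_gt_of_ne hc with hlt | hgt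
    · exact absurd (key w v hvw.ge hlt.le).2 (ne_of_gt hlt)
    · exact absurd (key v w hvw.le hgt.le).2 (ne_of_gt hgt)
  -- enumerate the left endpoints in increasing order
  set A : Finset ℝ := Finset.univ.image av with hA
  set iso := A.orderIsoOfFin rfl with hiso
  set aF : Fin A.card → ℝ := fun i => (iso i : ℝ) with haF
  have haFmono : StrictMono aF := fun i j hij => iso.strictMono hij
  have hmemA : ∀ v, av v ∈ A := fun v => Finset.mem_image_of_mem av (Finset.mem_univ v)
  set idx : X ⊕ Y → Fin A.card := fun v => iso.symm ⟨av v, hmemA v⟩ with hidx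
  have haidx : ∀ v, aF (idx v) = av v := by
    intro v
    rw [haF, hidx]
    simp only [OrderIso.apply_symm_apply]
  have hsurj : ∀ i : Fin A.card, ∃ v, av v = aF i := by
    intro i
    have : aF i ∈ A := (iso i).2
    rw [hA] at this
    obtain ⟨v, _, hv⟩ := Finset.mem_image.mp this
    exact ⟨v, hv⟩
  choose vof hvof using hsurj
  set bF : Fin A.card → ℝ := fun i => bv (vof i) with hbF
  have hbFmono : StrictMono bF := by
    intro i j hij
    exact F2 _ _ (by rw [hvof i, hvof j]; exact haFmono hij)
  have habF : ∀ i, aF i < bF i := by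
    intro i; rw [← hvof i]; exact hab _
  obtain ⟨xs, hxs, hxp⟩ := exists_unit_positions A.card aF bF haFmono hbFmono habF
  have hbidx : ∀ v, bF (idx v) = bv v := by
    intro v
    exact F1 (vof (idx v)) v (by rw [hvof, haidx])
  refine ⟨fun v => mkI (xs (idx v)) (xs (idx v) + 1) (lv v) (rv v),
    fun v => mkI_mem_UnitFam _ _ _, ?_⟩
  intro p q
  rw [hiff p q, hfv (Sum.inl p), hfv (Sum.inr q)]
  set u := Sum.inl p (α := X) (β := Y) with hu
  set w := Sum.inr q (α := X) (β := Y) with hw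
  rw [mkI_inter_nonempty (hab u) (hab w), mkI_inter_nonempty (lt_add_one _) (lt_add_one _)]
  have c1 : av u < bv w ↔ xs (idx u) < xs (idx w) + 1 := by
    rw [← haidx u, ← hbidx w]; exact ((hxp (idx w) (idx u)).1).symm
  have c1' : av w < bv u ↔ xs (idx w) < xs (idx u) + 1 := by
    rw [← haidx w, ← hbidx u]; exact ((hxp (idx u) (idx w)).1).symm
  have c2 : bv u = av w ↔ xs (idx u) + 1 = xs (idx w) := by
    rw [← haidx w, ← hbidx u]
    constructor
    · intro hh; exact ((hxp (idx u) (idx w)).2.mpr hh.symm).symm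
    · intro hh; exact ((hxp (idx u) (idx w)).2.mp hh.symm).symm
  have c3 : bv w = av u ↔ xs (idx w) + 1 = xs (idx u) := by
    rw [← haidx u, ← hbidx w]
    constructor
    · intro hh; exact ((hxp (idx w) (idx u)).2.mpr hh.symm).symm
    · intro hh; exact ((hxp (idx w) (idx u)).2.mp hh.symm).symm
  constructor
  · rintro (⟨h1, h2⟩ | ⟨h1, h2, h3⟩ | ⟨h1, h2, h3⟩)
    · exact Or.inl ⟨c1.mp h1, c1'.mp h2⟩
    · exact Or.inr (Or.inl ⟨c2.mp h1, h2, h3⟩)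
    · exact Or.inr (Or.inr ⟨c3.mp h1, h2, h3⟩)
  · rintro (⟨h1, h2⟩ | ⟨h1, h2, h3⟩ | ⟨h1, h2, h3⟩)
    · exact Or.inl ⟨c1.mpr h1, c1'.mpr h2⟩
    · exact Or.inr (Or.inl ⟨c2.mpr h1, h2, h3⟩)
    · exact Or.inr (Or.inr ⟨c3.mpr h1, h2, h3⟩)
theorem backward_dir {X Y : Type} [Fintype X] [Fintype Y] (E : X → Y → Prop)
    (h : IsMBigraph UnitFam E) : IsMixedProperIntervalBigraph E := by
  classical
  obtain ⟨f, hfam, hiff⟩ := h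
  have h1 : ∀ v : X ⊕ Y, ∃ a : ℝ, ∃ l r : Bool, f v = mkI a (a + 1) l r :=
    fun v => mem_UnitFam_iff.mp (hfam v)
  choose av lv rv hfv using h1
  -- the finite set of endpoints
  set P : Finset ℝ := Finset.univ.image av ∪ Finset.univ.image (fun v => av v + 1) with hP
  have hPa : ∀ v, av v ∈ P := fun v => by
    rw [hP]; exact Finset.mem_union_left _ (Finset.mem_image_of_mem av (Finset.mem_univ v))
  have hPb : ∀ v, av v + 1 ∈ P := fun v => by
    rw [hP]; exact Finset.mem_union_right _ (Finset.mem_image_of_mem _ (Finset.mem_univ v))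
  -- a small positive ε compared with all endpoint gaps
  set D : Finset ℝ := ((P ×ˢ P).filter (fun p => p.1 < p.2)).image (fun p => p.2 - p.1) with hD
  have hDpos : ∀ d ∈ D, 0 < d := by
    intro d hd
    rw [hD] at hd
    simp only [Finset.mem_image, Finset.mem_filter, Finset.mem_product] at hd
    obtain ⟨p, ⟨_, hlt⟩, rfl⟩ := hd
    linarith
  set ε : ℝ := if hDne : D.Nonempty then min (1/8) (D.min' hDne / 8) else 1/8 with hε
  have hε0 : 0 < ε := by
    rw [hε]; split_ifs with hDne
    · exact lt_min (by norm_num) (by linarith [hDpos _ (D.min'_mem hDne)])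
    · norm_num
  have hε8 : ε ≤ 1/8 := by
    rw [hε]; split_ifs
    · exact min_le_left _ _
    · exact le_refl _
  have hgap : ∀ s ∈ P, ∀ t ∈ P, s < t → 4*ε < t - s := by
    intro s hs t ht hst
    have hD1 : (t - s) ∈ D := by
      rw [hD]
      simp only [Finset.mem_image, Finset.mem_filter, Finset.mem_product]
      exact ⟨(s, t), ⟨⟨hs, ht⟩, hst⟩, rfl⟩
    have hDne : D.Nonempty := ⟨_, hD1⟩
    have hmin : D.min' hDne ≤ t - s := Finset.min'_le _ _ hD1
    have hminpos : 0 < D.min' hDne := hDpos _ (D.min'_mem hDne)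
    have hε2 : ε ≤ D.min' hDne / 8 := by
      rw [hε, dif_pos hDne]; exact min_le_right _ _
    linarith
  -- twin predicate: some vertex carries the corresponding closed interval
  set tw : X ⊕ Y → Prop := fun v => ∃ w, av w = av v ∧ lv w = true ∧ rv w = true with htw
  have hclosedtw : ∀ v, lv v = true → rv v = true → tw v := by
    intro v hl hr; rw [htw]; exact ⟨v, rfl, hl, hr⟩
  -- shrink amounts
  set eL : X ⊕ Y → ℝ := fun v => if lv v then 0 else (if rv v then 2*ε else ε) with heL
  set eR : X ⊕ Y → ℝ := fun v => if rv v then 0 else (if lv v then 2*ε else ε) with heR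
  have heLb : ∀ v, 0 ≤ eL v ∧ eL v ≤ 2*ε := by
    intro v; rw [heL]; dsimp only; split_ifs <;> constructor <;> linarith
  have heRb : ∀ v, 0 ≤ eR v ∧ eR v ≤ 2*ε := by
    intro v; rw [heR]; dsimp only; split_ifs <;> constructor <;> linarith
  have heL0 : ∀ v, lv v = true → eL v = 0 := by
    intro v hl; rw [heL]; dsimp only; rw [if_pos hl]
  have heR0 : ∀ v, rv v = true → eR v = 0 := by
    intro v hr; rw [heR]; dsimp only; rw [if_pos hr]
  have heLpos : ∀ v, lv v = false → 0 < eL v := by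
    intro v hl; rw [heL]; dsimp only; rw [if_neg (by simp [hl])]; split_ifs <;> linarith
  have heRpos : ∀ v, rv v = false → 0 < eR v := by
    intro v hr; rw [heR]; dsimp only; rw [if_neg (by simp [hr])]; split_ifs <;> linarith
  have hsum : ∀ v, ¬(lv v = true ∧ rv v = true) → eL v + eR v = 2*ε := by
    intro v hv
    rw [heL, heR]; dsimp only
    rcases Bool.eq_false_or_eq_true (lv v) with hl | hl <;>
      rcases Bool.eq_false_or_eq_true (rv v) with hr | hr <;>
      simp [hl, hr] at hv ⊢ <;> ring
  -- the new representation data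
  set AL : X ⊕ Y → ℝ := fun v => if tw v then av v else av v + eL v with hAL
  set AR : X ⊕ Y → ℝ := fun v => if tw v then av v + 1 else av v + 1 - eR v with hAR
  set Lb : X ⊕ Y → Bool := fun v => if tw v then lv v else true with hLb
  set Rb : X ⊕ Y → Bool := fun v => if tw v then rv v else true with hRb
  have hALb : ∀ v, av v ≤ AL v ∧ AL v ≤ av v + 2*ε := by
    intro v; rw [hAL]; dsimp only; split_ifs
    · constructor <;> linarith
    · have := heLb v; constructor <;> linarith
  have hARb : ∀ v, av v + 1 - 2*ε ≤ AR v ∧ AR v ≤ av v + 1 := by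
    intro v; rw [hAR]; dsimp only; split_ifs
    · constructor <;> linarith
    · have := heRb v; constructor <;> linarith
  have hALAR : ∀ v, AL v < AR v := by
    intro v
    have h1 := hALb v; have h2 := hARb v
    rw [hAL, hAR]; dsimp only; split_ifs
    · linarith
    · have h3 := heLb v; have h4 := heRb v; linarith
  have havne : ∀ u w : X ⊕ Y, av u ≠ av w → 4*ε < |av u - av w| := by
    intro u w hne
    rcases lt_or_gt_of_ne hne with hlt | hgt
    · rw [abs_of_neg (by linarith)]; have := hgap _ (hPa u) _ (hPa w) hlt; linarith
    · rw [abs_of_pos (by linarith)]; have := hgap _ (hPa w) _ (hPa u) hgt; linarith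
  -- clause-1 transfer
  have C1 : ∀ u w : X ⊕ Y, (av u < av w + 1 ↔ AL u < AR w) := by
    intro u w
    have h1 := hALb u; have h2 := hARb w
    constructor
    · intro hlt
      have := hgap _ (hPa u) _ (hPb w) hlt
      linarith
    · intro hlt
      by_contra hc
      push_neg at hc
      linarith
  -- touching endpoints are preserved exactly
  have hsep : ∀ u w : X ⊕ Y, AR u = AL w → av u + 1 = av w := by
    intro u w he
    have h1 := hALb w; have h2 := hARb u
    by_contra hc
    rcases lt_or_gt_of_ne hc with hlt | hgt
    · have := hgap _ (hPb u) _ (hPa w) hlt; linarith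
    · have := hgap _ (hPa w) _ (hPb u) hgt; linarith
  -- clause-2 transfer
  have C2 : ∀ u w : X ⊕ Y,
      ((av u + 1 = av w ∧ rv u = true ∧ lv w = true) ↔
        (AR u = AL w ∧ Rb u = true ∧ Lb w = true)) := by
    intro u w
    constructor
    · rintro ⟨he, hru, hlw⟩
      refine ⟨?_, ?_, ?_⟩
      · rw [hAR, hAL]; dsimp only
        rw [heR0 u hru, heL0 w hlw]
        split_ifs <;> linarith
      · rw [hRb]; dsimp only; split_ifs <;> simp [hru]
      · rw [hLb]; dsimp only; split_ifs <;> simp [hlw]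
    · rintro ⟨he, hRu, hLw⟩
      have havw : av u + 1 = av w := hsep u w he
      have hru : rv u = true := by
        by_cases htu : tw u
        · rw [hRb] at hRu; dsimp only at hRu; rwa [if_pos htu] at hRu
        · have hARu : AR u = av u + 1 - eR u := by rw [hAR]; dsimp only; rw [if_neg htu]
          have hALw := (hALb w).1
          have h0 : eR u ≤ 0 := by rw [hARu] at he; linarith
          by_contra hc
          have := heRpos u (by simpa using hc)
          linarith
      have hlw : lv w = true := by
        by_cases htw2 : tw w
        · rw [hLb] at hLw; dsimp only at hLw; rwa [if_pos htw2] at hLw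
        · have hALw : AL w = av w + eL w := by rw [hAL]; dsimp only; rw [if_neg htw2]
          have hARu := (hARb u).2
          have h0 : eL w ≤ 0 := by rw [hALw] at he; linarith
          by_contra hc
          have := heLpos w (by simpa using hc)
          linarith
      exact ⟨havw, hru, hlw⟩
  refine ⟨fun v => mkI (AL v) (AR v) (Lb v) (Rb v),
    fun v => mkI_mem_IntervalFam (hALAR v) _ _, ?_, ?_, ?_⟩
  · -- edge condition
    intro p q
    dsimp only
    rw [hiff p q, hfv (Sum.inl p), hfv (Sum.inr q),
      mkI_inter_nonempty (lt_add_one _) (lt_add_one _),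
      mkI_inter_nonempty (hALAR _) (hALAR _)]
    set u := Sum.inl p (α := X) (β := Y) with hu
    set w := Sum.inr q (α := X) (β := Y) with hw
    constructor
    · rintro (⟨h1, h2⟩ | ⟨h1, h2, h3⟩ | ⟨h1, h2, h3⟩)
      · exact Or.inl ⟨(C1 u w).mp h1, (C1 w u).mp h2⟩
      · exact Or.inr (Or.inl ((C2 u w).mp ⟨h1, h2, h3⟩))
      · exact Or.inr (Or.inr ((C2 w u).mp ⟨h1, h2, h3⟩))
    · rintro (⟨h1, h2⟩ | hcl | hcl)
      · exact Or.inl ⟨(C1 u w).mpr h1, (C1 w u).mpr h2⟩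
      · obtain ⟨h1, h2, h3⟩ := (C2 u w).mpr hcl
        exact Or.inr (Or.inl ⟨h1, h2, h3⟩)
      · obtain ⟨h1, h2, h3⟩ := (C2 w u).mpr hcl
        exact Or.inr (Or.inr ⟨h1, h2, h3⟩)
  · -- non-nesting of closed intervals
    intro u v hne hu hv hss
    dsimp only at hu hv hss
    obtain ⟨c, d, hcd, hgu⟩ := hu
    obtain ⟨c', d', hcd', hgv⟩ := hv
    rw [← mkI_tt] at hgu hgv
    obtain ⟨e1, e2, e3, e4⟩ := mkI_inj (hALAR u) hcd hgu
    obtain ⟨e1', e2', e3', e4'⟩ := mkI_inj (hALAR v) hcd' hgv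
    have hguIcc : mkI (AL u) (AR u) (Lb u) (Rb u) = Set.Icc (AL u) (AR u) := by
      rw [e3, e4, mkI_tt]
    have hgvIcc : mkI (AL v) (AR v) (Lb v) (Rb v) = Set.Icc (AL v) (AR v) := by
      rw [e3', e4', mkI_tt]
    rw [hguIcc, hgvIcc] at hss
    obtain ⟨hL, hR⟩ := (Set.Icc_subset_Icc_iff (hALAR u).le).mp hss.subset
    have hnee : ¬(AL u = AL v ∧ AR u = AR v) := by
      rintro ⟨q1, q2⟩
      exact hss.ne (by rw [q1, q2])
    by_cases htu : tw u <;> by_cases htv : tw v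
    · -- both have twins (both "unchanged")
      simp only [hAL, hAR, htu, htv, if_true] at hL hR
      have hav : av u = av v := le_antisymm (by linarith) hL
      exact hnee (by constructor <;> simp [hAL, hAR, htu, htv, hav])
    · -- u unchanged, v shrunk
      simp only [hAL, hAR, htu, htv, if_true, if_false] at hL hR
      have h3 := heLb v; have h4 := heRb v
      have hs : ¬(lv v = true ∧ rv v = true) := fun ⟨ha', hb'⟩ => htv (hclosedtw v ha' hb')
      have := hsum v hs
      linarith
    · -- u shrunk, v unchanged : then v's twin witnesses a twin for u
      simp only [hAL, hAR, htu, htv, if_true, if_false] at hL hR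
      have h3 := heLb u; have h4 := heRb u
      have hav : av u = av v := by
        by_contra hc
        have h5 := havne u v hc
        rcases abs_cases (av u - av v) with ⟨habs, _⟩ | ⟨habs, _⟩ <;> linarith
      have htv' := htv
      rw [htw] at htv'
      obtain ⟨w0, hw0, hlw0, hrw0⟩ := htv'
      exact htu (by rw [htw]; exact ⟨w0, by rw [hw0, ← hav], hlw0, hrw0⟩)
    · -- both shrunk
      simp only [hAL, hAR, htu, htv, if_false] at hL hR
      have h3 := heLb u; have h4 := heRb u
      have h5 := heLb v; have h6 := heRb v
      have hav : av u = av v := by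
        by_contra hc
        have h7 := havne u v hc
        rcases abs_cases (av u - av v) with ⟨habs, _⟩ | ⟨habs, _⟩ <;> linarith
      have hsu : ¬(lv u = true ∧ rv u = true) := fun ⟨ha', hb'⟩ => htu (hclosedtw u ha' hb')
      have hsv : ¬(lv v = true ∧ rv v = true) := fun ⟨ha', hb'⟩ => htv (hclosedtw v ha' hb')
      have hsum1 := hsum u hsu
      have hsum2 := hsum v hsv
      have heLeq : eL u = eL v := by linarith
      have heReq : eR u = eR v := by linarith
      refine hnee ⟨?_, ?_⟩
      · rw [hAL]; dsimp only; rw [if_neg htu, if_neg htv, hav, heLeq]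
      · rw [hAR]; dsimp only; rw [if_neg htu, if_neg htv, hav, heReq]
  · -- every non-closed interval has a closed mate
    intro u a b hab' hor
    dsimp only at hor ⊢
    have hclause : AL u = a ∧ AR u = b ∧ ¬(Lb u = true ∧ Rb u = true) := by
      rcases hor with h' | h' | h'
      · rw [← mkI_ff] at h'
        obtain ⟨e1, e2, e3, e4⟩ := mkI_inj (hALAR u) hab' h'
        exact ⟨e1, e2, by simp [e3]⟩
      · rw [← mkI_tf] at h'
        obtain ⟨e1, e2, e3, e4⟩ := mkI_inj (hALAR u) hab' h'
        exact ⟨e1, e2, by simp [e4]⟩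
      · rw [← mkI_ft] at h'
        obtain ⟨e1, e2, e3, e4⟩ := mkI_inj (hALAR u) hab' h'
        exact ⟨e1, e2, by simp [e3]⟩
    obtain ⟨e1, e2, e3⟩ := hclause
    have htu : tw u := by
      by_contra htu
      exact e3 (by constructor <;> simp [hLb, hRb, htu])
    have hALu : AL u = av u := by simp [hAL, htu]
    have hARu : AR u = av u + 1 := by simp [hAR, htu]
    have htu' := htu
    rw [htw] at htu'
    obtain ⟨w0, hw0, hlw0, hrw0⟩ := htu'
    have htww : tw w0 := hclosedtw w0 hlw0 hrw0
    refine ⟨w0, ?_⟩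
    have g1 : AL w0 = a := by
      rw [← e1, hALu]; simp [hAL, htww, hw0]
    have g2 : AR w0 = b := by
      rw [← e2, hARu]; simp [hAR, htww, hw0]
    have g3 : Lb w0 = true := by simp [hLb, htww, hlw0]
    have g4 : Rb w0 = true := by simp [hRb, htww, hrw0]
    rw [g1, g2, g3, g4, mkI_tt]

/-- A bigraph is a mixed proper interval bigraph iff it is a mixed unit interval
bigraph. -/
theorem mixedProper_iff_mixedUnit {X Y : Type} [Fintype X] [Fintype Y]
    (E : X → Y → Prop) :
    IsMixedProperIntervalBigraph E ↔ IsMBigraph UnitFam E := ⟨forward_dir E, backward_dir E⟩
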